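/- arXiv:2406.15929 — 5 statements merged into one kernel-verified Lean document; each statement's English description precedes it below -/
import Mathlib

section
/- Let f be a polynomial with complex coefficients in the n²+n variables {x_{ki}, x'_{ki} : 1 ≤ i ≤ k ≤ n}. If f vanishes when evaluated at the family of entries (ℓ_{ki}, ℓ'_{ki}) of every C-standard tableau of type C, then f = 0. -/
open scoped BigOperators Classical

noncomputable section

namespace GTpaper

/-- `a - b ∈ ℤ≥0`, the integer-shift order `a ≥ b` on `ℂ`. -/
def IntGE (a b : ℂ) : Prop := ∃ m : ℕ, a = b + m

/-- `a - b ∈ ℤ>0`, the strict integer-shift order `a > b` on `ℂ`. -/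
def IntGT (a b : ℂ) : Prop := ∃ m : ℕ, a = b + m + 1

/-- `a ∈ ℤ` as a subset of `ℂ`. -/
def IsInt (a : ℂ) : Prop := ∃ m : ℤ, a = m

/-- `a ∈ 1/2 + ℤ` as a subset of `ℂ`. -/
def IsHalfInt (a : ℂ) : Prop := ∃ m : ℤ, a = (m : ℂ) + 1 / 2

/-- A tableau: a doubly indexed family of unprimed entries `u k i` (`ℓ_{ki}`) and primed
entries `p k i` (`ℓ'_{ki}`).  Only positions with `1 ≤ i ≤ k ≤ n` (resp. `2 ≤ i` for the primed
entries of type-`D` tableaux) are relevant; normalization predicates below set the rest to `0`. -/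
structure Tab (R : Type*) where
  u : ℕ → ℕ → R
  p : ℕ → ℕ → R

instance : Add (Tab ℤ) :=
  ⟨fun a b => ⟨fun k i => a.u k i + b.u k i, fun k i => a.p k i + b.p k i⟩⟩

instance : Neg (Tab ℤ) := ⟨fun a => ⟨fun k i => -a.u k i, fun k i => -a.p k i⟩⟩

/-- Add an integer tableau `Z` to a tableau `L`. -/
def Tab.addZ {R : Type*} [Ring R] (L : Tab R) (Z : Tab ℤ) : Tab R :=
  ⟨fun k i => L.u k i + (Z.u k i : R), fun k i => L.p k i + (Z.p k i : R)⟩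

/-- `δ^{(k i)}`: the integer tableau with a single `1` at unprimed position `(k,i)`. -/
def deltaU (k i : ℕ) : Tab ℤ :=
  ⟨fun a b => if a = k ∧ b = i then 1 else 0, fun _ _ => 0⟩

/-- `δ^{(k i)'}`: the integer tableau with a single `1` at primed position `(k,i)`. -/
def deltaP (k i : ℕ) : Tab ℤ :=
  ⟨fun _ _ => 0, fun a b => if a = k ∧ b = i then 1 else 0⟩

section Coeffs

variable {F : Type*} [Field F]

/-- `ω_k(L)`, the `k`-th component of the `C`-weight of a type-`C` tableau. -/
def wt (k : ℕ) (L : Tab F) : F :=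
  2 * (∑ i ∈ Finset.Icc 1 k, L.p k i) - (∑ i ∈ Finset.Icc 1 k, L.u k i) -
    (∑ i ∈ Finset.Icc 1 (k - 1), L.u (k - 1) i) + (k : F) - 1 / 2

/-- `A_{ki}(L)`. -/
def coA (k i : ℕ) (L : Tab F) : F :=
  ∏ a ∈ (Finset.Icc 1 k).erase i, (L.p k a - L.p k i)⁻¹

/-- `B_{ki}(L)`. -/
def coB (k i : ℕ) (L : Tab F) : F :=
  2 * coA k i L * (2 * L.p k i - 1) * (∏ a ∈ Finset.Icc 1 k, (L.u k a - L.p k i)) *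
    ∏ a ∈ Finset.Icc 1 (k - 1), (L.u (k - 1) a - L.p k i)

/-- `C_{ki}(L)`. -/
def coC (k i : ℕ) (L : Tab F) : F :=
  (2 * L.u (k - 1) i - 1)⁻¹ *
    ∏ a ∈ (Finset.Icc 1 (k - 1)).erase i,
      ((L.u (k - 1) i - L.u (k - 1) a) * (L.u (k - 1) i + L.u (k - 1) a - 1))⁻¹

/-- `D_{kijm}(L)`. -/
def coD (k i j m : ℕ) (L : Tab F) : F :=
  coA k i L * coA (k - 1) m L * coC k j L *
    (∏ a ∈ (Finset.Icc 1 k).erase i, (L.u (k - 1) j ^ 2 - L.p k a ^ 2)) *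
    ∏ a ∈ (Finset.Icc 1 (k - 1)).erase m, (L.u (k - 1) j ^ 2 - L.p (k - 1) a ^ 2)

end Coeffs

/-- The `C`-weight `ω(T(L)) ∈ ℂ^n` of a type-`C` tableau. -/
def cwtv (n : ℕ) (T : Tab ℂ) : Fin n → ℂ := fun k => wt ((k : ℕ) + 1) T

/-- A type-`C` tableau is `C`-standard (conditions (7) and (8)). -/
def IsCStandard (n : ℕ) (T : Tab ℂ) : Prop :=
  ∀ k, 1 ≤ k → k ≤ n →
    (IntGE (-(1 / 2)) (T.p k 1) ∧
      (∀ i, 1 ≤ i → i ≤ k → IntGE (T.p k i) (T.u k i)) ∧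
      (∀ i, 1 ≤ i → i + 1 ≤ k → IntGT (T.u k i) (T.p k (i + 1))) ∧
      (2 ≤ k →
        (∀ i, 1 ≤ i → i ≤ k - 1 → IntGE (T.p k i) (T.u (k - 1) i)) ∧
        (∀ i, 1 ≤ i → i ≤ k - 1 → IntGT (T.u (k - 1) i) (T.p k (i + 1)))))

/-- A type-`D` tableau is `D`-standard (conditions (5) and (6)); primed entries `p k 1`
are irrelevant. -/
def IsDStandard (n : ℕ) (T : Tab ℂ) : Prop :=
  ∀ k, 2 ≤ k → k ≤ n →
    (IntGE (-T.p k 2) (T.u k 1) ∧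
      (∀ i, 2 ≤ i → i ≤ k → IntGE (T.p k i) (T.u k i)) ∧
      (∀ i, 1 ≤ i → i + 1 ≤ k → IntGT (T.u k i) (T.p k (i + 1))) ∧
      IntGE (-T.p k 2) (T.u (k - 1) 1) ∧
      (∀ i, 2 ≤ i → i ≤ k - 1 → IntGE (T.p k i) (T.u (k - 1) i)) ∧
      (∀ i, 1 ≤ i → i ≤ k - 1 → IntGT (T.u (k - 1) i) (T.p k (i + 1))))

/-- `C`-regularity of a type-`C` tableau. -/
def IsCRegular (n : ℕ) (T : Tab ℂ) : Prop :=
  (∀ k i a, 1 ≤ i → i ≤ k → 1 ≤ a → a ≤ k → k ≤ n → i ≠ a → T.p k a ≠ T.p k i) ∧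
  (∀ k i a, 1 ≤ i → i ≤ k → 1 ≤ a → a ≤ k → k ≤ n - 1 → i ≠ a → T.u k a ≠ T.u k i) ∧
  (∀ k i a, 1 ≤ i → i ≤ k → 1 ≤ a → a ≤ k → k ≤ n - 1 → i ≠ a → T.u k a + T.u k i ≠ 1) ∧
  (∀ k i, 1 ≤ i → i ≤ k → k ≤ n - 1 → T.u k i ≠ 1 / 2)

/-- `C`-genericity of a type-`C` tableau. -/
def IsCGeneric (n : ℕ) (T : Tab ℂ) : Prop :=
  (∀ k i a, 1 ≤ i → i ≤ k → 1 ≤ a → a ≤ k → k ≤ n → i ≠ a → ¬IsInt (T.p k a - T.p k i)) ∧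
  (∀ k i a, 1 ≤ i → i ≤ k → 1 ≤ a → a ≤ k → k ≤ n - 1 → i ≠ a → ¬IsInt (T.u k a - T.u k i)) ∧
  (∀ k i a, 1 ≤ i → i ≤ k → 1 ≤ a → a ≤ k → k ≤ n - 1 → ¬IsInt (T.u k a + T.u k i)) ∧
  (∀ k i, 1 ≤ i → i ≤ k → k ≤ n - 1 → ¬IsHalfInt (T.u k i))

/-- Normalization of a type-`C` tableau: all entries outside `1 ≤ i ≤ k ≤ n` vanish. -/
def CNorm (n : ℕ) (T : Tab ℂ) : Prop :=
  (∀ k i, ¬(1 ≤ i ∧ i ≤ k ∧ k ≤ n) → T.u k i = 0) ∧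
  (∀ k i, ¬(1 ≤ i ∧ i ≤ k ∧ k ≤ n) → T.p k i = 0)

/-- Normalization of a type-`D` tableau: unprimed entries outside `1 ≤ i ≤ k ≤ n` and primed
entries outside `2 ≤ i ≤ k ≤ n` vanish. -/
def DNorm (n : ℕ) (T : Tab ℂ) : Prop :=
  (∀ k i, ¬(1 ≤ i ∧ i ≤ k ∧ k ≤ n) → T.u k i = 0) ∧
  (∀ k i, ¬(2 ≤ i ∧ i ≤ k ∧ k ≤ n) → T.p k i = 0)

/-- A dominant `so(2n)`-weight. -/
def SODominant {n : ℕ} (lam : Fin n → ℂ) : Prop :=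
  (∀ i j : Fin n, (i : ℕ) + 1 = (j : ℕ) → IntGE (lam i) (lam j)) ∧
  (∀ i j : Fin n, (i : ℕ) = 0 → (j : ℕ) = 1 → IntGE (-(lam i + lam j)) 0)

/-- `D_st^λ`: the set of (normalized) `D`-standard tableaux with top row
`ℓ_i = λ_i - i + 3/2` (`1`-based `i`). -/
def DSt (n : ℕ) (lam : Fin n → ℂ) : Set (Tab ℂ) :=
  {T | DNorm n T ∧ IsDStandard n T ∧
    ∀ i : Fin n, T.u n ((i : ℕ) + 1) = lam i - ((i : ℕ) + 1) + 3 / 2}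

/-- The type-`D` tableau obtained from a type-`C` tableau by deleting the entries
`ℓ'_{11}, …, ℓ'_{n1}`. -/
def CtoD (W : Tab ℂ) : Tab ℂ := ⟨W.u, fun k i => if i = 1 then 0 else W.p k i⟩

/-- `𝔅(μ,λ)`: type-`C` tableaux whose left-most primed column is in `μ + ℤ^n` and whose
remaining part is a `D`-standard tableau with top row `λ + ρ_D + 1/2`. -/
def TabB (n : ℕ) (mu lam : Fin n → ℂ) : Set (Tab ℂ) :=
  {W | CNorm n W ∧ (∀ k : Fin n, IsInt (W.p ((k : ℕ) + 1) 1 - mu k)) ∧ CtoD W ∈ DSt n lam}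

/-- Membership of a vector of `ℂ^n` in the root lattice `Q_C = {a ∈ ℤ^n | ∑ a_i ∈ 2ℤ}`. -/
def QCvec {n : ℕ} (v : Fin n → ℂ) : Prop :=
  ∃ q : Fin n → ℤ, (2 ∣ ∑ i, q i) ∧ ∀ i, v i = (q i : ℂ)

/-! ### The symplectic Lie algebra `sp(2n, ℂ)` -/

/-- Index set `{1,…,n} × {±}` for rows/columns of `2n × 2n` matrices: `(k, true)` is the
positive index `k`, `(k, false)` is the negative index `-k`. -/
abbrev SpIdx (n : ℕ) := Fin n × Bool

/-- The sign of an index. -/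
def sgnC {n : ℕ} (a : SpIdx n) : ℂ := if a.2 then 1 else -1

/-- `a ↦ -a` on indices. -/
def negIdx {n : ℕ} (a : SpIdx n) : SpIdx n := (a.1, !a.2)

/-- `F_{ab} = E_{ab} - sgn(a)sgn(b) E_{-b,-a}`. -/
def Fmat (n : ℕ) (a b : SpIdx n) : Matrix (SpIdx n) (SpIdx n) ℂ :=
  Matrix.single a b 1 - Matrix.single (negIdx b) (negIdx a) (sgnC a * sgnC b)

attribute [local instance 100] LieRing.ofAssociativeRing

/-- `sp(2n, ℂ)`: the Lie subalgebra of `gl(2n, ℂ)` spanned by the `F_{ab}`. -/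
def sp (n : ℕ) : LieSubalgebra ℂ (Matrix (SpIdx n) (SpIdx n) ℂ) :=
  LieSubalgebra.lieSpan ℂ _ (Set.range fun x : SpIdx n × SpIdx n => Fmat n x.1 x.2)

/-- `F_{ab}` as an element of `sp(2n, ℂ)`. -/
def spF (n : ℕ) (a b : SpIdx n) : sp n :=
  ⟨Fmat n a b, LieSubalgebra.subset_lieSpan ⟨(a, b), rfl⟩⟩

/-- The basis vector of the free module on a set `S` of tableaux attached to `L`, with the
convention that `T(L) = 0` whenever `L ∉ S`. -/
def bvec {F : Type*} [Field F] (S : Set (Tab F)) (L : Tab F) : ↥S →₀ F :=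
  if h : L ∈ S then Finsupp.single ⟨L, h⟩ 1 else 0

/-- The statement that a Lie algebra homomorphism `ρ : sp(2n,ℂ) → End(V)` acts on the basis `S`
of tableaux by the Gelfand--Tsetlin formulas (with 1-based row index `k+1` for `k : Fin n`). -/
def GTact (n : ℕ) {F : Type*} [Field F] [Algebra ℂ F] (S : Set (Tab F))
    (ρ : sp n →ₗ⁅ℂ⁆ Module.End ℂ (↥S →₀ F)) : Prop :=
  ∀ L ∈ S,
    (∀ k : Fin n,
      ρ (spF n (k, true) (k, true)) (bvec S L) = wt ((k : ℕ) + 1) L • bvec S L ∧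
      ρ (spF n (k, true) (k, false)) (bvec S L) =
        ∑ i ∈ Finset.Icc 1 ((k : ℕ) + 1),
          coA ((k : ℕ) + 1) i L • bvec S (L.addZ (deltaP ((k : ℕ) + 1) i)) ∧
      ρ (spF n (k, false) (k, true)) (bvec S L) =
        ∑ i ∈ Finset.Icc 1 ((k : ℕ) + 1),
          coB ((k : ℕ) + 1) i L • bvec S (L.addZ (-deltaP ((k : ℕ) + 1) i))) ∧
    (∀ k : Fin n, 1 ≤ (k : ℕ) →
      ρ (spF n (⟨(k : ℕ) - 1, lt_of_le_of_lt (Nat.sub_le _ _) k.isLt⟩, true) (k, false))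
          (bvec S L) =
        (∑ i ∈ Finset.Icc 1 (k : ℕ),
          coC ((k : ℕ) + 1) i L • bvec S (L.addZ (-deltaU (k : ℕ) i))) +
        ∑ i ∈ Finset.Icc 1 ((k : ℕ) + 1), ∑ j ∈ Finset.Icc 1 (k : ℕ), ∑ m ∈ Finset.Icc 1 (k : ℕ),
          coD ((k : ℕ) + 1) i j m L •
            bvec S (L.addZ (deltaP ((k : ℕ) + 1) i + deltaU (k : ℕ) j + deltaP (k : ℕ) m)))

/-- The set of tableaux `{T(L + Z)}` with `Z` an integer tableau vanishing on the unprimed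
top row. -/
def orbitB {F : Type*} [Field F] (n : ℕ) (L : Tab F) : Set (Tab F) :=
  {M | ∃ Z : Tab ℤ, (∀ i, Z.u n i = 0) ∧ M = L.addZ Z}

/-- The tableau `T(W^{μ,λ})`. -/
def Wup (n : ℕ) (mu lam : Fin n → ℂ) : Tab ℂ :=
  ⟨fun k i => if h : 1 ≤ i ∧ i ≤ k ∧ k ≤ n then lam ⟨i - 1, by omega⟩ - (i : ℂ) + 3 / 2 else 0,
   fun k i => if h : 1 ≤ i ∧ i ≤ k ∧ k ≤ n then
      (if i = 1 then mu ⟨k - 1, by omega⟩ else lam ⟨i - 1, by omega⟩ - (i : ℂ) + 3 / 2) else 0⟩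

/-- The tableau `T(W_{μ,λ})`. -/
def Wlow (n : ℕ) (mu lam : Fin n → ℂ) : Tab ℂ :=
  ⟨fun k i => if h : 1 ≤ i ∧ i ≤ k ∧ k ≤ n then
      (if i = 1 then
        (if (n - k) % 2 = 0 then lam ⟨0, by omega⟩ + 1 / 2 else 1 - (lam ⟨0, by omega⟩ + 1 / 2))
       else lam ⟨i - 1, by omega⟩ - (i : ℂ) + 3 / 2) else 0,
   fun k i => if h : 1 ≤ i ∧ i ≤ k ∧ k ≤ n then
      (if i = 1 then mu ⟨k - 1, by omega⟩ else lam ⟨i - 1, by omega⟩ - (i : ℂ) + 3 / 2) else 0⟩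

/-- `𝔅_k^+(μ,λ)` for a `1`-based row index `k`. -/
def BkPlus (n : ℕ) (mu lam : Fin n → ℂ) (k : ℕ) : Set (Tab ℂ) :=
  {W | W ∈ TabB n mu lam ∧ IntGE (W.p k 1) (1 / 2)}

end GTpaper

namespace GTpaper

/-- Index set for the `n² + n` variables `x_{ki}, x'_{ki}` (`1 ≤ i ≤ k ≤ n`);
the boolean is `true` for primed variables. -/
def VIdx (n : ℕ) := {x : ℕ × ℕ // 1 ≤ x.2 ∧ x.2 ≤ x.1 ∧ x.1 ≤ n} × Bool

instance (n : ℕ) : Finite (VIdx n) := by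
  have : Finite {x : ℕ × ℕ // 1 ≤ x.2 ∧ x.2 ≤ x.1 ∧ x.1 ≤ n} :=
    (((Set.finite_Iic n).prod (Set.finite_Iic n)).subset
      fun x hx => ⟨hx.2.2, hx.2.1.trans hx.2.2⟩).to_subtype
  exact inferInstanceAs (Finite (_ × Bool))

lemma IntGT.intGE {a b : ℂ} (h : IntGT a b) : IntGE a b := by
  obtain ⟨m, rfl⟩ := h
  exact ⟨m + 1, by push_cast; ring⟩

lemma intGE_sub_natCast (c : ℂ) (a : ℕ) : IntGE c (c - a) := ⟨a, by ring⟩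

lemma intGT_sub_natCast (c : ℂ) {a b : ℕ} (h : a < b) : IntGT (c - a) (c - b) :=
  ⟨b - a - 1, by rw [Nat.cast_sub (by omega), Nat.cast_sub h.le]; ring⟩

/-- Points below `c` that descend in integer steps along `r` are Zariski dense in `ℂ^σ`: they
contain a box with sides of any prescribed size, so the Combinatorial Nullstellensatz applies. -/
theorem eq_zero_of_eval_eq_zero_of_descending {σ : Type*} [Finite σ] (r : σ → ℕ) (c : ℂ)
    (f : MvPolynomial σ ℂ)
    (hf : ∀ x : σ → ℂ, (∀ v, IntGE c (x v)) → (∀ v w, r v < r w → IntGT (x v) (x w)) →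
      MvPolynomial.eval x f = 0) :
    f = 0 := by
  set M := f.totalDegree + 1
  let S : σ → Finset ℂ := fun v => (Finset.range M).image fun y => c - ((r v * M + y : ℕ) : ℂ)
  refine MvPolynomial.eq_zero_of_eval_zero_at_prod_finset f S (fun v => ?_) fun x hx => ?_
  · rw [Finset.card_image_of_injective _ fun y y' h => by simpa using h, Finset.card_range]
    exact Nat.lt_succ_of_le (MvPolynomial.degreeOf_le_totalDegree f v)
  · choose y hyM hy using fun v => Finset.mem_image.mp (hx v)
    refine hf x (fun v => hy v ▸ intGE_sub_natCast c _) fun v w hvw => ?_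
    rw [← hy v, ← hy w]
    apply intGT_sub_natCast
    calc r v * M + y v < (r v + 1) * M := by have := Finset.mem_range.mp (hyM v); linarith
      _ ≤ r w * M + y w := by nlinarith

/-- `C`-standardness only compares a primed entry of column `i` with an unprimed one of the
same column (weakly larger) and an unprimed entry of column `i` with a primed one of column
`i + 1` (strictly larger), so families descending along this rank are standard. -/
def colRank {n : ℕ} (v : VIdx n) : ℕ := 2 * v.1.1.2 + cond v.2 0 1

def tabOf (n : ℕ) (x : VIdx n → ℂ) : Tab ℂ :=
  ⟨fun k i => if h : 1 ≤ i ∧ i ≤ k ∧ k ≤ n then x ⟨⟨(k, i), h⟩, false⟩ else 0,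
   fun k i => if h : 1 ≤ i ∧ i ≤ k ∧ k ≤ n then x ⟨⟨(k, i), h⟩, true⟩ else 0⟩

section tabOf

variable {n : ℕ} (x : VIdx n → ℂ) {k i : ℕ}

lemma tabOf_u (h : 1 ≤ i ∧ i ≤ k ∧ k ≤ n) : (tabOf n x).u k i = x ⟨⟨(k, i), h⟩, false⟩ :=
  dif_pos h

lemma tabOf_p (h : 1 ≤ i ∧ i ≤ k ∧ k ≤ n) : (tabOf n x).p k i = x ⟨⟨(k, i), h⟩, true⟩ :=
  dif_pos h

lemma tabOf_entries :
    (fun v : VIdx n => if v.2 then (tabOf n x).p v.1.1.1 v.1.1.2 else (tabOf n x).u v.1.1.1 v.1.1.2)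
      = x := by
  funext ⟨⟨_, h⟩, b⟩
  cases b
  · exact tabOf_u x h
  · exact tabOf_p x h

lemma isCStandard_tabOf (hc : ∀ v, IntGE (-(1 / 2)) (x v))
    (hx : ∀ v w, colRank v < colRank w → IntGT (x v) (x w)) : IsCStandard n (tabOf n x) := by
  have hu (k i) (h : 1 ≤ i ∧ i ≤ k ∧ k ≤ n) := tabOf_u x h
  have hp (k i) (h : 1 ≤ i ∧ i ≤ k ∧ k ≤ n) := tabOf_p x h
  intro k hk hkn
  refine ⟨?_, fun i hi hik => ?_, fun i hi hik => ?_, fun hk2 => ⟨fun i hi hik => ?_,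
    fun i hi hik => ?_⟩⟩
  · rw [hp k 1 (by omega)]
    exact hc _
  · rw [hp k i (by omega), hu k i (by omega)]
    exact (hx _ _ (by simp only [colRank, cond_true, cond_false]; omega)).intGE
  · rw [hu k i (by omega), hp k (i + 1) (by omega)]
    exact hx _ _ (by simp only [colRank, cond_true, cond_false]; omega)
  · rw [hp k i (by omega), hu (k - 1) i (by omega)]
    exact (hx _ _ (by simp only [colRank, cond_true, cond_false]; omega)).intGE
  · rw [hu (k - 1) i (by omega), hp k (i + 1) (by omega)]
    exact hx _ _ (by simp only [colRank, cond_true, cond_false]; omega)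

end tabOf

theorem density_lemma_general (n : ℕ) (f : MvPolynomial (VIdx n) ℂ)
    (hf : ∀ T : Tab ℂ, IsCStandard n T →
      MvPolynomial.eval
        (fun v : VIdx n => if v.2 then T.p v.1.1.1 v.1.1.2 else T.u v.1.1.1 v.1.1.2) f = 0) :
    f = 0 :=
  eq_zero_of_eval_eq_zero_of_descending colRank (-(1 / 2)) f fun x hc hx => by
    simpa only [tabOf_entries] using hf (tabOf n x) (isCStandard_tabOf x hc hx)

/-- density lemma: a polynomial in the `n²+n` variables vanishing on the
entries of every `C`-standard tableau is zero. -/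
theorem density_lemma (n : ℕ) (hn : 2 ≤ n) (f : MvPolynomial (VIdx n) ℂ)
    (hf : ∀ T : Tab ℂ, IsCStandard n T →
      MvPolynomial.eval
        (fun v : VIdx n => if v.2 then T.p v.1.1.1 v.1.1.2 else T.u v.1.1.1 v.1.1.2) f = 0) :
    f = 0 :=
  density_lemma_general n f hf

end GTpaper
end
end

section
/- Let μ ∈ ℂ^n and let λ ∈ (1/2+ℤ)^n be a dominant so(2n)-weight; set ℓ_i = λ_i − i + 3/2. Let T(W_{μ,λ}) be the type-C tableau with w'_{k1} = μ_k for k ∈ [n], w_{n1} = ℓ_1, w_{k−1,1} = 1 − w_{k1} for 2 ≤ k ≤ n, and w_{ki} = w'_{ki} = ℓ_i for 2 ≤ i ≤ k ≤ n. Then T(W_{μ,λ}) ∈ B(μ,λ); moreover ω(T(W_{μ,λ})) = 2μ + λ if n is even, and ω(T(W_{μ,λ})) = 2μ + (−λ_1, λ_2, …, λ_n) if n is odd. -/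
open scoped BigOperators Classical

noncomputable section

namespace GTpaper

/-! ### The symplectic Lie algebra `sp(2n, ℂ)` -/

attribute [local instance 100] LieRing.ofAssociativeRing

end GTpaper

/-!
Beyond its first column every row of `T(W_{μ,λ})` reads `ℓ_2, ℓ_3, …`, so `D`-standardness
reduces to the strict decrease of the `ℓ_i` and to `-ℓ_2 ≥ x > ℓ_2` for the first-column entries
`x ∈ {ℓ_1, 1 - ℓ_1}`, which is exactly the dominance `λ_1 ≥ λ_2`, `-λ_1 - λ_2 ≥ 0`. In `ω_k` the
common entries cancel up to `ℓ_k`, and two consecutive first-column entries add up to `1`; only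
`ω_1` sees a first-column entry alone, namely `ℓ_1` or `1 - ℓ_1` according to the parity of `n`.
-/

namespace GTpaper

/-- `ℓ_i = λ_i - i + 3/2` for a 1-based index `i ∈ [1, n]`, and `0` otherwise. -/
def ell (n : ℕ) (lam : Fin n → ℂ) (i : ℕ) : ℂ :=
  if h : i - 1 < n then lam ⟨i - 1, h⟩ - (i : ℂ) + 3 / 2 else 0

lemma IntGE.refl (a : ℂ) : IntGE a a := ⟨0, by simp⟩

/-- This is why the alternating first column `ℓ_1, 1 - ℓ_1, ℓ_1, …` of `T(W_{μ,λ})` obeys the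
`D`-standardness conditions `-ℓ_2 ≥ x > ℓ_2`. -/
lemma intGT_and_intGE_one_sub {x y : ℂ} (hgt : IntGT x y) (hge : IntGE (-y) x) :
    IntGT (1 - x) y ∧ IntGE (-y) (1 - x) := by
  obtain ⟨m, hm⟩ := hgt
  obtain ⟨m', hm'⟩ := hge
  exact ⟨⟨m', by linear_combination hm'⟩, ⟨m, by linear_combination hm⟩⟩

section Ell

variable {n : ℕ} {lam : Fin n → ℂ}

lemma ell_val_add_one (i : Fin n) : ell n lam ((i : ℕ) + 1) = lam i - ((i : ℕ) + 1) + 3 / 2 := by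
  simp only [ell, Nat.add_sub_cancel, dif_pos i.isLt]
  push_cast
  ring

lemma ell_intGT_ell_succ (hdom : SODominant lam) {i : ℕ} (hi : 1 ≤ i) (hin : i + 1 ≤ n) :
    IntGT (ell n lam i) (ell n lam (i + 1)) := by
  obtain ⟨m, hm⟩ := hdom.1 ⟨i - 1, by omega⟩ ⟨i, by omega⟩ (Nat.sub_add_cancel hi)
  refine ⟨m, ?_⟩
  have hsucc := ell_val_add_one (lam := lam) ⟨i, by omega⟩
  have hprev := ell_val_add_one (lam := lam) ⟨i - 1, by omega⟩
  simp only [Nat.sub_add_cancel hi] at hsucc hprev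
  rw [hsucc, hprev, hm, Nat.cast_sub hi]
  push_cast
  ring

lemma ell_one_bounds (hn : 2 ≤ n) (hdom : SODominant lam) :
    IntGT (ell n lam 1) (ell n lam 2) ∧ IntGE (-ell n lam 2) (ell n lam 1) := by
  refine ⟨ell_intGT_ell_succ hdom le_rfl hn, ?_⟩
  obtain ⟨m, hm⟩ := hdom.2 ⟨0, by omega⟩ ⟨1, by omega⟩ rfl rfl
  refine ⟨m, ?_⟩
  rw [ell_val_add_one (⟨0, by omega⟩ : Fin n), ell_val_add_one (⟨1, by omega⟩ : Fin n)]
  push_cast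
  linear_combination hm

end Ell

lemma isDStandard_of_columns (n : ℕ) (T : Tab ℂ) (s : ℕ → ℂ)
    (hp : ∀ k i, 2 ≤ i → i ≤ k → k ≤ n → T.p k i = s i)
    (hu : ∀ k i, 2 ≤ i → i ≤ k → k ≤ n → T.u k i = s i)
    (hs : ∀ i, 2 ≤ i → i + 1 ≤ n → IntGT (s i) (s (i + 1)))
    (hfirst : ∀ k, 1 ≤ k → k ≤ n → IntGT (T.u k 1) (s 2) ∧ IntGE (-s 2) (T.u k 1)) :
    IsDStandard n T := by
  have hrow : ∀ k j, 1 ≤ j → j ≤ k → k ≤ n → ∀ i, 1 ≤ i → i ≤ j → i + 1 ≤ k →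
      IntGT (T.u j i) (T.p k (i + 1)) := by
    intro k j hj hjk hk i hi hij hik
    rw [hp k (i + 1) (by omega) (by omega) hk]
    rcases hi.eq_or_lt with rfl | hi
    · exact (hfirst j hj (by omega)).1
    · rw [hu j i hi (by omega) (by omega)]
      exact hs i hi (by omega)
  intro k hk2 hkn
  have hp2 := hp k 2 le_rfl hk2 hkn
  refine ⟨hp2 ▸ (hfirst k (by omega) hkn).2, fun i hi hik => ?_,
    fun i hi hik => hrow k k (by omega) le_rfl hkn i hi (by omega) hik,
    hp2 ▸ (hfirst (k - 1) (by omega) (by omega)).2, fun i hi hik => ?_,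
    fun i hi hik => hrow k (k - 1) (by omega) (by omega) hkn i hi hik (by omega)⟩
  · rw [hp k i hi hik hkn, hu k i hi hik hkn]
    exact IntGE.refl _
  · rw [hp k i hi (by omega) hkn, hu (k - 1) i hi hik (by omega)]
    exact IntGE.refl _

section Weight

variable {F : Type*} [Field F]

lemma wt_one (L : Tab F) : wt 1 L = 2 * L.p 1 1 - L.u 1 1 + 1 - 1 / 2 := by
  simp only [wt, Finset.Icc_self, Finset.sum_singleton, Nat.sub_self, Finset.Icc_eq_empty_of_lt
    zero_lt_one, Finset.sum_empty, Nat.cast_one]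
  ring

lemma wt_succ_of_rows {k : ℕ} (hk : 1 ≤ k) (L : Tab F) (s : ℕ → F)
    (hp : ∀ i ∈ Finset.Ioc 1 (k + 1), L.p (k + 1) i = s i)
    (hu : ∀ i ∈ Finset.Ioc 1 (k + 1), L.u (k + 1) i = s i)
    (hu' : ∀ i ∈ Finset.Ioc 1 k, L.u k i = s i) :
    wt (k + 1) L = 2 * L.p (k + 1) 1 - L.u (k + 1) 1 - L.u k 1 + s (k + 1) + k + 1 - 1 / 2 := by
  simp only [wt, Nat.add_sub_cancel]
  rw [← Finset.add_sum_Ioc_eq_sum_Icc (by omega), ← Finset.add_sum_Ioc_eq_sum_Icc (by omega),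
    ← Finset.add_sum_Ioc_eq_sum_Icc hk, Finset.sum_congr rfl hp, Finset.sum_congr rfl hu,
    Finset.sum_congr rfl hu', Finset.sum_Ioc_succ_top hk]
  push_cast
  ring

end Weight

section Wlow

variable {n : ℕ} {mu lam : Fin n → ℂ}

lemma Wlow_u_of_two_le {k i : ℕ} (hi : 2 ≤ i) (hik : i ≤ k) (hk : k ≤ n) :
    (Wlow n mu lam).u k i = ell n lam i := by
  simp only [Wlow, ell]
  rw [dif_pos ⟨by omega, hik, hk⟩, if_neg (by omega), dif_pos (by omega)]

lemma Wlow_p_of_two_le {k i : ℕ} (hi : 2 ≤ i) (hik : i ≤ k) (hk : k ≤ n) :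
    (Wlow n mu lam).p k i = ell n lam i := by
  simp only [Wlow, ell]
  rw [dif_pos ⟨by omega, hik, hk⟩, if_neg (by omega), dif_pos (by omega)]

lemma Wlow_p_one (k : Fin n) : (Wlow n mu lam).p ((k : ℕ) + 1) 1 = mu k := by
  simp only [Wlow]
  rw [dif_pos ⟨le_rfl, by omega, k.isLt⟩]
  simp

lemma Wlow_u_one {k : ℕ} (hk : 1 ≤ k) (hkn : k ≤ n) :
    (Wlow n mu lam).u k 1 = if (n - k) % 2 = 0 then ell n lam 1 else 1 - ell n lam 1 := by
  have h1 := ell_val_add_one (lam := lam) ⟨0, by omega⟩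
  simp only [zero_add] at h1
  simp only [Wlow, dif_pos (show 1 ≤ 1 ∧ 1 ≤ k ∧ k ≤ n from ⟨le_rfl, hk, hkn⟩), ↓reduceIte, h1]
  split_ifs <;> push_cast <;> ring

lemma Wlow_u_one_add_u_one {k : ℕ} (hk : 1 ≤ k) (hkn : k + 1 ≤ n) :
    (Wlow n mu lam).u (k + 1) 1 + (Wlow n mu lam).u k 1 = 1 := by
  rw [Wlow_u_one (by omega) hkn, Wlow_u_one hk (by omega)]
  split_ifs <;> first | omega | ring

lemma Wlow_u_one_bounds (hn : 2 ≤ n) (hdom : SODominant lam) {k : ℕ} (hk : 1 ≤ k)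
    (hkn : k ≤ n) :
    IntGT ((Wlow n mu lam).u k 1) (ell n lam 2) ∧ IntGE (-ell n lam 2) ((Wlow n mu lam).u k 1) := by
  have h := ell_one_bounds hn hdom
  rw [Wlow_u_one hk hkn]
  split_ifs
  · exact h
  · exact intGT_and_intGE_one_sub h.1 h.2

lemma cNorm_Wlow : CNorm n (Wlow n mu lam) :=
  ⟨fun _ _ h => by simp only [Wlow]; rw [dif_neg h],
    fun _ _ h => by simp only [Wlow]; rw [dif_neg h]⟩

lemma dNorm_CtoD_Wlow : DNorm n (CtoD (Wlow n mu lam)) := by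
  refine ⟨(cNorm_Wlow (mu := mu) (lam := lam)).1, fun k i h => ?_⟩
  show (if i = 1 then 0 else (Wlow n mu lam).p k i) = 0
  split_ifs with h1
  · rfl
  · exact cNorm_Wlow.2 k i (by omega)

lemma CtoD_Wlow_mem_DSt (hn : 2 ≤ n) (hdom : SODominant lam) :
    CtoD (Wlow n mu lam) ∈ DSt n lam := by
  refine ⟨dNorm_CtoD_Wlow, ?_, fun i => ?_⟩
  · refine isDStandard_of_columns n _ (ell n lam) (fun k i hi hik hk => ?_)
      (fun k i => Wlow_u_of_two_le (mu := mu)) (fun i hi => ell_intGT_ell_succ hdom (by omega))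
      (fun k => Wlow_u_one_bounds (mu := mu) hn hdom)
    show (if i = 1 then 0 else (Wlow n mu lam).p k i) = ell n lam i
    rw [if_neg (by omega), Wlow_p_of_two_le hi hik hk]
  · show (Wlow n mu lam).u n ((i : ℕ) + 1) = _
    rw [← ell_val_add_one]
    rcases Nat.eq_zero_or_pos (i : ℕ) with h0 | hpos
    · rw [h0, zero_add, Wlow_u_one (by omega) le_rfl, if_pos (by simp)]
    · exact Wlow_u_of_two_le (by omega) i.isLt le_rfl

lemma cwtv_Wlow_of_ne_zero (k : Fin n) (hk : (k : ℕ) ≠ 0) :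
    cwtv n (Wlow n mu lam) k = 2 * mu k + lam k := by
  have hkn : (k : ℕ) + 1 ≤ n := k.isLt
  rw [cwtv, wt_succ_of_rows (by omega) _ (ell n lam)
      (fun i hi => Wlow_p_of_two_le (Finset.mem_Ioc.1 hi).1 (Finset.mem_Ioc.1 hi).2 hkn)
      (fun i hi => Wlow_u_of_two_le (Finset.mem_Ioc.1 hi).1 (Finset.mem_Ioc.1 hi).2 hkn)
      (fun i hi => Wlow_u_of_two_le (Finset.mem_Ioc.1 hi).1 (Finset.mem_Ioc.1 hi).2 (by omega)),
    Wlow_p_one, ell_val_add_one]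
  linear_combination -Wlow_u_one_add_u_one (mu := mu) (lam := lam) (by omega) hkn

lemma cwtv_Wlow_of_eq_zero (k : Fin n) (hk : (k : ℕ) = 0) :
    cwtv n (Wlow n mu lam) k = 2 * mu k + if n % 2 = 0 then lam k else -lam k := by
  have hp : (Wlow n mu lam).p 1 1 = mu k := by simpa [hk] using Wlow_p_one (lam := lam) k
  have hell : ell n lam 1 = lam k + 1 / 2 := by
    have h := ell_val_add_one (lam := lam) k
    rw [hk] at h
    simp only [zero_add, Nat.cast_zero] at h
    rw [h]
    ring
  simp only [cwtv, hk, zero_add]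
  rw [wt_one, hp, Wlow_u_one le_rfl (by omega), hell]
  split_ifs <;> first | omega | ring

end Wlow

theorem Wlow_mem_and_weight_general (n : ℕ) (hn : 2 ≤ n) (mu lam : Fin n → ℂ)
    (hdom : SODominant lam) :
    Wlow n mu lam ∈ TabB n mu lam ∧
      (n % 2 = 0 → ∀ k : Fin n, cwtv n (Wlow n mu lam) k = 2 * mu k + lam k) ∧
      (n % 2 = 1 → ∀ k : Fin n,
        cwtv n (Wlow n mu lam) k = 2 * mu k + (if (k : ℕ) = 0 then -lam k else lam k)) := by
  refine ⟨⟨cNorm_Wlow, fun k => ⟨0, by rw [Wlow_p_one, sub_self, Int.cast_zero]⟩,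
    CtoD_Wlow_mem_DSt hn hdom⟩, fun hpar k => ?_, fun hpar k => ?_⟩ <;>
  rcases eq_or_ne (k : ℕ) 0 with hk | hk
  · rw [cwtv_Wlow_of_eq_zero k hk, if_pos hpar]
  · exact cwtv_Wlow_of_ne_zero k hk
  · rw [cwtv_Wlow_of_eq_zero k hk, if_neg (by omega), if_pos hk]
  · rw [cwtv_Wlow_of_ne_zero k hk, if_neg hk]

/-- `T(W_{μ,λ}) ∈ 𝔅(μ,λ)`, and `ω(T(W_{μ,λ})) = 2μ + λ` for even `n`,
while `ω(T(W_{μ,λ})) = 2μ + τ₁λ` for odd `n`. -/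
theorem Wlow_mem_and_weight (n : ℕ) (hn : 2 ≤ n) (mu lam : Fin n → ℂ)
    (hlam : ∀ i, IsHalfInt (lam i)) (hdom : SODominant lam) :
    Wlow n mu lam ∈ TabB n mu lam ∧
      (n % 2 = 0 → ∀ k : Fin n, cwtv n (Wlow n mu lam) k = 2 * mu k + lam k) ∧
      (n % 2 = 1 → ∀ k : Fin n,
        cwtv n (Wlow n mu lam) k = 2 * mu k + (if (k : ℕ) = 0 then -lam k else lam k)) :=
  Wlow_mem_and_weight_general n hn mu lam hdom

end GTpaper
end
end

section
/- Let λ ∈ (1/2+ℤ)^n be a dominant so(2n)-weight, let k ∈ [n−1], and let T(R) ∈ D_st^λ. Define f_k(T(R)) = T(R+δ^{(k1)}) if r_{k1} ≠ −r'_{k2} and r_{k1} ≠ −r'_{k+1,2} (for k = 1 the first condition is vacuous since r'_{12} does not exist), and f_k(T(R)) = T(R−δ^{(k1)}) otherwise, where δ^{(k1)} is the type-D tableau with entry 1 at unprimed position (k,1) and 0 elsewhere. Then f_k(T(R)) ∈ D_st^λ. -/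
/-!
`f_k` changes only `ℓ_{k1}`, and `D`-standardness constrains `ℓ_{k1}` only through the windows
`q < ℓ_{k1} ≤ -q` for `q = ℓ'_{k2}` and `q = ℓ'_{k+1,2}`. Raising `ℓ_{k1}` by one keeps it in
both windows unless it already sits at an upper end, which is exactly when `f_k` lowers it
instead. Lowering never breaks an upper bound. For the lower bounds, `ℓ_{k1} = -q > q` gives
`ℓ_{k1} > -ℓ_{k1}`; the first column is integral (it is tied to `ℓ_{n1} = λ_1 + 1/2` by
integer steps), so `ℓ_{k1} ≥ 1` and `ℓ_{k1} - 1 > -ℓ_{k1} ≥ q` in both windows.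
-/
open scoped BigOperators Classical

noncomputable section

namespace GTpaper

attribute [local instance 100] LieRing.ofAssociativeRing

end GTpaper

namespace GTpaper

/-- The map `f_k` on type-`D` tableaux. -/
def fkD (k : ℕ) (R : Tab ℂ) : Tab ℂ :=
  if (k = 1 ∨ R.u k 1 ≠ -R.p k 2) ∧ R.u k 1 ≠ -R.p (k + 1) 2
  then R.addZ (deltaU k 1) else R.addZ (-deltaU k 1)

def InWindow (q x : ℂ) : Prop := IntGE (-q) x ∧ IntGT x q

lemma IsInt.of_intGE_of_intGE {a b c : ℂ} (ha : IsInt a) (hca : IntGE c a) (hcb : IntGE c b) :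
    IsInt b := by
  obtain ⟨K, rfl⟩ := ha
  obtain ⟨m₁, hm₁⟩ := hca
  obtain ⟨m₂, hm₂⟩ := hcb
  exact ⟨K + m₁ - m₂, by push_cast; linear_combination hm₁ - hm₂⟩

lemma IntGE.add_one_of_ne {a b : ℂ} (h : IntGE a b) (hne : b ≠ a) : IntGE a (b + 1) := by
  obtain ⟨_ | m, hm⟩ := h
  · exact absurd (by simpa using hm.symm) hne
  · exact ⟨m, by push_cast at hm; linear_combination hm⟩

lemma IntGE.sub_one {a b : ℂ} (h : IntGE a b) : IntGE a (b - 1) := by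
  obtain ⟨m, hm⟩ := h
  exact ⟨m + 1, by push_cast; linear_combination hm⟩

lemma IntGT.add_one {a b : ℂ} (h : IntGT a b) : IntGT (a + 1) b := by
  obtain ⟨m, hm⟩ := h
  exact ⟨m + 1, by push_cast; linear_combination hm⟩

lemma InWindow.add_one {q x : ℂ} (h : InWindow q x) (hne : x ≠ -q) : InWindow q (x + 1) :=
  ⟨h.1.add_one_of_ne hne, h.2.add_one⟩

lemma InWindow.intGT_neg_of_eq {q x : ℂ} (h : InWindow q x) (hx : x = -q) : IntGT x (-x) := by
  simpa [hx] using h.2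

lemma InWindow.sub_one {q x : ℂ} (h : InWindow q x) (hx : IsInt x) (hpos : IntGT x (-x)) :
    InWindow q (x - 1) := by
  obtain ⟨K, rfl⟩ := hx
  obtain ⟨m₁, hm₁⟩ := h.1
  obtain ⟨m₂, hm₂⟩ := hpos
  have hK : 2 * K = m₂ + 1 := by
    exact_mod_cast (by push_cast; linear_combination hm₂ : ((2 * K : ℤ) : ℂ) = ((m₂ + 1 : ℤ) : ℂ))
  refine ⟨h.1.sub_one, (m₁ + m₂ - 1 : ℕ), ?_⟩
  rw [Nat.cast_sub (by omega)]
  push_cast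
  linear_combination hm₂ + hm₁

namespace IsDStandard

variable {n : ℕ} {R : Tab ℂ}

lemma inWindow_row (hR : IsDStandard n R) {k : ℕ} (hk2 : 2 ≤ k) (hkn : k ≤ n) :
    InWindow (R.p k 2) (R.u k 1) :=
  ⟨(hR k hk2 hkn).1, (hR k hk2 hkn).2.2.1 1 le_rfl (by omega)⟩

lemma inWindow_below (hR : IsDStandard n R) {k : ℕ} (hk1 : 1 ≤ k) (hkn : k + 1 ≤ n) :
    InWindow (R.p (k + 1) 2) (R.u k 1) := by
  obtain ⟨-, -, -, h₄, -, h₆⟩ := hR (k + 1) (by omega) hkn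
  exact ⟨h₄, h₆ 1 le_rfl hk1⟩

lemma isInt_u_one (hR : IsDStandard n R) (htop : IsInt (R.u n 1)) {j : ℕ} (hj1 : 1 ≤ j)
    (hjn : j ≤ n) : IsInt (R.u j 1) := by
  induction hjn using Nat.decreasingInduction with
  | self => exact htop
  | of_succ j hj ih =>
    obtain ⟨h₁, -, -, h₄, -, -⟩ := hR (j + 1) (by omega) hj
    exact (ih (by omega)).of_intGE_of_intGE h₁ h₄

lemma of_eq_off {R' : Tab ℂ} (hR : IsDStandard n R) {k : ℕ} (hp : R'.p = R.p)
    (hu : ∀ a b, ¬(a = k ∧ b = 1) → R'.u a b = R.u a b)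
    (hrow : 2 ≤ k → k ≤ n → InWindow (R.p k 2) (R'.u k 1))
    (hbelow : k + 1 ≤ n → InWindow (R.p (k + 1) 2) (R'.u k 1)) :
    IsDStandard n R' := by
  intro m hm2 hmn
  obtain ⟨h₁, h₂, h₃, h₄, h₅, h₆⟩ := hR m hm2 hmn
  have hu' : ∀ a b, 2 ≤ b → R'.u a b = R.u a b := fun a b hb => hu a b (by omega)
  rw [hp]
  refine ⟨?_, fun i hi2 him => hu' m i hi2 ▸ h₂ i hi2 him, fun i hi1 him => ?_, ?_,
    fun i hi2 him => hu' (m - 1) i hi2 ▸ h₅ i hi2 him, fun i hi1 him => ?_⟩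
  · by_cases hmk : m = k
    · subst hmk; exact (hrow hm2 hmn).1
    · rwa [hu m 1 (by omega)]
  · by_cases hmk : m = k ∧ i = 1
    · obtain ⟨rfl, rfl⟩ := hmk; exact (hrow hm2 hmn).2
    · rw [hu m i hmk]; exact h₃ i hi1 him
  · by_cases hmk : m - 1 = k
    · obtain rfl : m = k + 1 := by omega
      exact (hbelow hmn).1
    · rwa [hu (m - 1) 1 (by omega)]
  · by_cases hmk : m - 1 = k ∧ i = 1
    · obtain ⟨hmk, rfl⟩ := hmk
      obtain rfl : m = k + 1 := by omega
      exact (hbelow hmn).2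
    · rw [hu (m - 1) i hmk]; exact h₆ i hi1 him

end IsDStandard

lemma mem_DSt_of_eq_off {n : ℕ} {lam : Fin n → ℂ} {R R' : Tab ℂ} (hR : R ∈ DSt n lam) {k : ℕ}
    (hk1 : 1 ≤ k) (hkn : k < n) (hp : R'.p = R.p)
    (hu : ∀ a b, ¬(a = k ∧ b = 1) → R'.u a b = R.u a b)
    (hrow : 2 ≤ k → InWindow (R.p k 2) (R'.u k 1))
    (hbelow : InWindow (R.p (k + 1) 2) (R'.u k 1)) :
    R' ∈ DSt n lam := by
  obtain ⟨⟨hnu, hnp⟩, hst, htop⟩ := hR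
  refine ⟨⟨fun a b hab => ?_, hp ▸ hnp⟩,
    hst.of_eq_off hp hu (fun hk2 _ => hrow hk2) (fun _ => hbelow), fun i => ?_⟩
  · rw [hu a b (by omega)]; exact hnu a b hab
  · rw [hu n _ (by omega)]; exact htop i

@[simp] lemma Tab.neg_u (Z : Tab ℤ) : (-Z).u = -Z.u := rfl

@[simp] lemma Tab.neg_p (Z : Tab ℤ) : (-Z).p = -Z.p := rfl

section AddDeltaU

variable (R : Tab ℂ) (k i : ℕ)

@[simp] lemma addZ_deltaU_p : (R.addZ (deltaU k i)).p = R.p := by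
  ext a b; simp [Tab.addZ, deltaU]

@[simp] lemma addZ_neg_deltaU_p : (R.addZ (-deltaU k i)).p = R.p := by
  ext a b; simp [Tab.addZ, deltaU]

lemma addZ_deltaU_u (a b : ℕ) :
    (R.addZ (deltaU k i)).u a b = R.u a b + if a = k ∧ b = i then 1 else 0 := by
  simp only [Tab.addZ, deltaU]; push_cast; rfl

lemma addZ_neg_deltaU_u (a b : ℕ) :
    (R.addZ (-deltaU k i)).u a b = R.u a b - if a = k ∧ b = i then 1 else 0 := by
  simp only [Tab.addZ, deltaU, Tab.neg_u, Pi.neg_apply]; push_cast; ring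

end AddDeltaU

theorem fk_maps_DSt_to_DSt_general (n : ℕ) (lam : Fin n → ℂ)
    (hlam : ∀ i, IsHalfInt (lam i))
    (k : ℕ) (hk1 : 1 ≤ k) (hk : k ≤ n - 1) (R : Tab ℂ) (hR : R ∈ DSt n lam) :
    fkD k R ∈ DSt n lam := by
  have hst := hR.2.1
  have hint : IsInt (R.u k 1) := by
    refine hst.isInt_u_one ?_ hk1 (by omega)
    obtain ⟨m, hm⟩ := hlam ⟨0, by omega⟩
    exact ⟨m + 1, by rw [hR.2.2 ⟨0, by omega⟩, hm]; push_cast; ring⟩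
  have hbelow := hst.inWindow_below hk1 (by omega)
  unfold fkD
  split_ifs with hcond
  · refine mem_DSt_of_eq_off hR hk1 (by omega) (addZ_deltaU_p ..)
      (fun a b h => by simp [addZ_deltaU_u, h]) (fun hk2 => ?_) ?_ <;>
      simp only [addZ_deltaU_u, and_self, if_true]
    · exact (hst.inWindow_row hk2 (by omega)).add_one (hcond.1.resolve_left (by omega))
    · exact hbelow.add_one hcond.2
  · have hpos : IntGT (R.u k 1) (-R.u k 1) := by
      by_cases hb : R.u k 1 = -R.p (k + 1) 2
      · exact hbelow.intGT_neg_of_eq hb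
      · have hk2 : 2 ≤ k := by by_contra; exact hcond ⟨Or.inl (by omega), hb⟩
        exact (hst.inWindow_row hk2 (by omega)).intGT_neg_of_eq
          (by by_contra h; exact hcond ⟨Or.inr h, hb⟩)
    refine mem_DSt_of_eq_off hR hk1 (by omega) (addZ_neg_deltaU_p ..)
      (fun a b h => by simp [addZ_neg_deltaU_u, h]) (fun hk2 => ?_) ?_ <;>
      simp only [addZ_neg_deltaU_u, and_self, if_true]
    · exact (hst.inWindow_row hk2 (by omega)).sub_one hint hpos
    · exact hbelow.sub_one hint hpos

/-- `f_k` maps `D_st^λ` to itself, for `k ∈ [n-1]`. -/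
theorem fk_maps_DSt_to_DSt (n : ℕ) (hn : 2 ≤ n) (lam : Fin n → ℂ)
    (hlam : ∀ i, IsHalfInt (lam i)) (hdom : SODominant lam)
    (k : ℕ) (hk1 : 1 ≤ k) (hk : k ≤ n - 1) (R : Tab ℂ) (hR : R ∈ DSt n lam) :
    fkD k R ∈ DSt n lam :=
  fk_maps_DSt_to_DSt_general n lam hlam k hk1 hk R hR

end GTpaper
end
end

section
/- Let μ ∈ (ℂ∖ℤ)^n, let λ ∈ (1/2+ℤ)^n be a dominant so(2n)-weight, and let Z be a type-C tableau with integer entries and z_{n1} = ⋯ = z_{nn} = 0. If T(R) and T(R+Z) both belong to B(μ,λ) and ω(T(R)) = ω(T(R+Z)), then ∑_{i=1}^{k} z_{ki} ∈ 2ℤ for every k ∈ [n−1]. -/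
open scoped BigOperators Classical

noncomputable section

namespace GTpaper

attribute [local instance 100] LieRing.ofAssociativeRing

end GTpaper

namespace GTpaper

/-!
Comparing `ω_k(R + Z)` with `ω_k(R)` shows that equal weights force
`s_k + s_{k-1} = 2 ∑_i z'_{ki}` for the row sums `s_k = ∑_i z_{ki}`. Since the top row sum
`s_n` vanishes, evenness propagates down the rows.
-/

def Tab.rowSum {R : Type*} [AddCommMonoid R] (T : Tab R) (k : ℕ) : R :=
  ∑ i ∈ Finset.Icc 1 k, T.u k i

def Tab.primedRowSum {R : Type*} [AddCommMonoid R] (T : Tab R) (k : ℕ) : R :=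
  ∑ i ∈ Finset.Icc 1 k, T.p k i

section Weight

variable {F : Type*} [Field F]

theorem wt_eq_rowSum (k : ℕ) (L : Tab F) :
    wt k L = 2 * L.primedRowSum k - L.rowSum k - L.rowSum (k - 1) + (k : F) - 1 / 2 :=
  rfl

theorem rowSum_addZ (L : Tab F) (Z : Tab ℤ) (k : ℕ) :
    (L.addZ Z).rowSum k = L.rowSum k + (Z.rowSum k : F) := by
  simp only [Tab.rowSum, Tab.addZ, Finset.sum_add_distrib, Int.cast_sum]

theorem primedRowSum_addZ (L : Tab F) (Z : Tab ℤ) (k : ℕ) :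
    (L.addZ Z).primedRowSum k = L.primedRowSum k + (Z.primedRowSum k : F) := by
  simp only [Tab.primedRowSum, Tab.addZ, Finset.sum_add_distrib, Int.cast_sum]

theorem wt_addZ (k : ℕ) (L : Tab F) (Z : Tab ℤ) :
    wt k (L.addZ Z) =
      wt k L + ((2 * Z.primedRowSum k - Z.rowSum k - Z.rowSum (k - 1) : ℤ) : F) := by
  simp only [wt_eq_rowSum, rowSum_addZ, primedRowSum_addZ]
  push_cast
  ring

theorem rowSum_add_rowSum_eq_of_wt_addZ_eq [CharZero F] {k : ℕ} {L : Tab F} {Z : Tab ℤ}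
    (h : wt (k + 1) (L.addZ Z) = wt (k + 1) L) :
    Z.rowSum (k + 1) + Z.rowSum k = 2 * Z.primedRowSum (k + 1) := by
  rw [wt_addZ, add_eq_left, Int.cast_eq_zero, Nat.add_sub_cancel] at h
  omega

end Weight

theorem dvd_of_dvd_add_succ {α : Type*} [NonUnitalRing α] {d : α} {s : ℕ → α} {n : ℕ}
    (htop : d ∣ s n) (hstep : ∀ k < n, d ∣ s (k + 1) + s k) {k : ℕ} (hk : k ≤ n) : d ∣ s k := by
  induction hk using Nat.decreasingInduction with
  | self => exact htop
  | of_succ k hk ih => exact (dvd_add_right ih).mp (hstep k hk)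

theorem same_weight_even_row_sums_general (n : ℕ)
    (Z : Tab ℤ) (hZ : ∀ i, 1 ≤ i → i ≤ n → Z.u n i = 0)
    (R : Tab ℂ)
    (hw : ∀ j : Fin n, wt ((j : ℕ) + 1) (R.addZ Z) = wt ((j : ℕ) + 1) R) :
    ∀ k, 1 ≤ k → k ≤ n - 1 → (2 : ℤ) ∣ ∑ i ∈ Finset.Icc 1 k, Z.u k i := by
  have htop : Z.rowSum n = 0 :=
    Finset.sum_eq_zero fun i hi => hZ i (Finset.mem_Icc.mp hi).1 (Finset.mem_Icc.mp hi).2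
  have hstep : ∀ k < n, 2 ∣ Z.rowSum (k + 1) + Z.rowSum k := fun k hk =>
    ⟨_, rowSum_add_rowSum_eq_of_wt_addZ_eq (hw ⟨k, hk⟩)⟩
  intro k _ hk
  exact dvd_of_dvd_add_succ (htop ▸ dvd_zero 2) hstep (hk.trans (Nat.sub_le n 1))

/-- if `T(R)` and `T(R+Z)` are both in `𝔅(μ,λ)` and have the same
`C`-weight, then the row sums of `Z` are even. -/
theorem same_weight_even_row_sums (n : ℕ) (hn : 2 ≤ n) (mu lam : Fin n → ℂ)
    (hmu : ∀ i, ¬IsInt (mu i)) (hlam : ∀ i, IsHalfInt (lam i)) (hdom : SODominant lam)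
    (Z : Tab ℤ) (hZ : ∀ i, 1 ≤ i → i ≤ n → Z.u n i = 0)
    (R : Tab ℂ) (hR : R ∈ TabB n mu lam) (hRZ : R.addZ Z ∈ TabB n mu lam)
    (hw : ∀ j : Fin n, wt ((j : ℕ) + 1) (R.addZ Z) = wt ((j : ℕ) + 1) R) :
    ∀ k, 1 ≤ k → k ≤ n - 1 → (2 : ℤ) ∣ ∑ i ∈ Finset.Icc 1 k, Z.u k i :=
  same_weight_even_row_sums_general n Z hZ R hw
end GTpaper
end
end

section
/- Let μ ∈ (ℂ∖ℤ)^n and let λ ∈ (1/2+ℤ)^n be a dominant so(2n)-weight. Then {ω(T(W)) : T(W) ∈ B(μ,λ)} = {2μ + λ + (1,…,1) + q : q ∈ Q_C}. -/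
open scoped BigOperators Classical

noncomputable section

namespace GTpaper

attribute [local instance 100] LieRing.ofAssociativeRing

end GTpaper

/-!
The unprimed entries of a tableau in `𝔅(μ,λ)`, and its primed entries off the first column, are
integers: the top row is, and the interlacing conditions propagate integrality downwards. With `U_k`
the `k`-th unprimed row sum, `ω_k - (2μ_k + λ_k + 1)` is `2(ℓ'_{k1} - μ_k)` plus an integer
`≡ U_k + U_{k-1} + ℓ_{nk} (mod 2)`, and summed over `k` this telescopes to `2 U_n ≡ 0`.

Conversely, `ω(T(W)) = 2 (ℓ'_{k1})_k + ω(T(W)_D)` and the first primed column ranges over all of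
`μ + ℤ^n`, so only the parities of the `D`-part matter. The tableau whose `i`-th columns (`i ≥ 2`)
are constant equal to `ℓ_i` and whose first column `t_k` lies in `{-ℓ_2, -ℓ_2 - 1}` is
`D`-standard by dominance; its weight is `λ_k + 1 - (t_{k-1} + t_k)` with `t_0 = t_n = ℓ_1`, and
the `t_k` can be chosen to realize every parity vector with even sum.
-/

namespace GTpaper

open Finset

lemma intGE_iff_of_sub_eq {a b : ℂ} {d : ℤ} (h : a - b = d) : IntGE a b ↔ 0 ≤ d := by
  constructor
  · rintro ⟨m, hm⟩
    have : (d : ℂ) = (m : ℤ) := by rw [← h, hm]; push_cast; ring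
    exact_mod_cast (Int.cast_injective this).symm ▸ Int.natCast_nonneg m
  · intro hd
    refine ⟨d.toNat, ?_⟩
    rw [show ((d.toNat : ℕ) : ℂ) = (d : ℂ) by exact_mod_cast Int.toNat_of_nonneg hd, ← h]
    ring

lemma intGT_iff_of_sub_eq {a b : ℂ} {d : ℤ} (h : a - b = d) : IntGT a b ↔ 0 < d := by
  have h' : a - (b + 1) = ((d - 1 : ℤ) : ℂ) := by push_cast; rw [← h]; ring
  rw [show IntGT a b ↔ IntGE a (b + 1) by simp only [IntGT, IntGE, add_right_comm],
    intGE_iff_of_sub_eq h']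
  omega

lemma intGE_intCast {a b : ℤ} (h : b ≤ a) : IntGE (a : ℂ) (b : ℂ) :=
  (intGE_iff_of_sub_eq (d := a - b) (by push_cast; ring)).2 (by omega)

lemma intGT_intCast {a b : ℤ} (h : b < a) : IntGT (a : ℂ) (b : ℂ) :=
  (intGT_iff_of_sub_eq (d := a - b) (by push_cast; ring)).2 (by omega)

lemma IntGE.isInt_iff {a b : ℂ} (h : IntGE a b) : IsInt a ↔ IsInt b := by
  obtain ⟨m, rfl⟩ := h
  constructor
  · rintro ⟨x, hx⟩; exact ⟨x - m, by push_cast; rw [← hx]; ring⟩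
  · rintro ⟨x, rfl⟩; exact ⟨x + m, by push_cast; ring⟩

lemma IntGT.isInt_iff {a b : ℂ} (h : IntGT a b) : IsInt a ↔ IsInt b := by
  obtain ⟨m, rfl⟩ := h
  exact IntGE.isInt_iff ⟨m + 1, by push_cast; ring⟩

lemma sum_Icc_one_eq_add {M : Type*} [AddCommMonoid M] (f : ℕ → M) {k : ℕ} (hk : 1 ≤ k) :
    ∑ i ∈ Icc 1 k, f i = f 1 + ∑ i ∈ Icc 2 k, f i := by
  rw [← insert_Icc_add_one_left_eq_Icc hk, sum_insert (by simp)]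
  rfl

lemma sum_Icc_one_eq_sum_range {M : Type*} [AddCommMonoid M] (f : ℕ → M) (n : ℕ) :
    ∑ i ∈ Icc 1 n, f i = ∑ i ∈ range n, f (i + 1) := by
  rw [range_eq_Ico, sum_Ico_add' f 0 n 1]
  rfl

lemma wt_eq_two_mul_add_wt_CtoD (W : Tab ℂ) {k : ℕ} (hk : 1 ≤ k) :
    wt k W = 2 * W.p k 1 + wt k (CtoD W) := by
  have hp : ∑ i ∈ Icc 1 k, W.p k i = W.p k 1 + ∑ i ∈ Icc 1 k, (CtoD W).p k i := by
    simp only [CtoD, sum_Icc_one_eq_add _ hk, if_pos, zero_add]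
    congr 1
    exact sum_congr rfl fun i hi => (if_neg (by simp at hi; omega)).symm
  have hu : (CtoD W).u = W.u := rfl
  simp only [wt, hp, hu]
  ring

lemma IsDStandard.isInt_of_isInt_row {n k : ℕ} {T : Tab ℂ} (hT : IsDStandard n T)
    (hk : 2 ≤ k) (hkn : k ≤ n) (hrow : ∀ i, 1 ≤ i → i ≤ k → IsInt (T.u k i)) :
    (∀ i, 2 ≤ i → i ≤ k → IsInt (T.p k i)) ∧ ∀ i, 1 ≤ i → i ≤ k - 1 → IsInt (T.u (k - 1) i) := by
  obtain ⟨-, -, hu_p, -, hp_u', hu'_p⟩ := hT k hk hkn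
  have hp : ∀ i, 2 ≤ i → i ≤ k → IsInt (T.p k i) := by
    intro i hi hik
    obtain ⟨j, rfl⟩ : ∃ j, i = j + 1 := ⟨i - 1, by omega⟩
    exact (hu_p j (by omega) hik).isInt_iff.1 (hrow j (by omega) (by omega))
  refine ⟨hp, fun i hi hik => ?_⟩
  rcases hi.eq_or_lt with rfl | hi
  · exact (hu'_p 1 le_rfl hik).isInt_iff.2 (hp 2 le_rfl hk)
  · exact (hp_u' i hi hik).isInt_iff.1 (hp i hi (by omega))

lemma isInt_of_mem_DSt {n : ℕ} {lam : Fin n → ℂ} (hlam : ∀ i, IsHalfInt (lam i)) {T : Tab ℂ}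
    (hT : T ∈ DSt n lam) (k i : ℕ) : IsInt (T.u k i) ∧ IsInt (T.p k i) := by
  obtain ⟨⟨hu0, hp0⟩, hstd, htop⟩ := hT
  have hrow : ∀ k ≤ n, ∀ i, 1 ≤ i → i ≤ k → IsInt (T.u k i) := by
    intro k hkn
    induction hkn using Nat.decreasingInduction with
    | self =>
      intro i hi hin
      obtain ⟨j, rfl⟩ : ∃ j, i = j + 1 := ⟨i - 1, by omega⟩
      obtain ⟨m, hm⟩ := hlam ⟨j, by omega⟩
      refine ⟨m + 1 - j, ?_⟩
      rw [htop ⟨j, by omega⟩, hm]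
      push_cast
      ring
    | of_succ k hk ih =>
      intro i hi hik
      exact (hstd.isInt_of_isInt_row (by omega) hk ih).2 i hi hik
  have hzero : IsInt 0 := ⟨0, by simp⟩
  constructor
  · by_cases h : 1 ≤ i ∧ i ≤ k ∧ k ≤ n
    · exact hrow k h.2.2 i h.1 h.2.1
    · rw [hu0 k i h]; exact hzero
  · by_cases h : 2 ≤ i ∧ i ≤ k ∧ k ≤ n
    · exact (hstd.isInt_of_isInt_row (by omega) h.2.2 (hrow k h.2.2)).1 i h.1 h.2.1
    · rw [hp0 k i h]; exact hzero

lemma qcvec_wt_sub_of_mem_DSt {n : ℕ} {lam : Fin n → ℂ} (hlam : ∀ i, IsHalfInt (lam i))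
    {T : Tab ℂ} (hT : T ∈ DSt n lam) : QCvec (fun k => wt ((k : ℕ) + 1) T - (lam k + 1)) := by
  choose U hU using fun k i => (isInt_of_mem_DSt hlam hT k i).1
  choose P hP using fun k i => (isInt_of_mem_DSt hlam hT k i).2
  set R : ℕ → ℤ := fun k => ∑ i ∈ Icc 1 k, U k i
  set S : ℕ → ℤ := fun k => ∑ i ∈ Icc 1 k, P k i
  refine ⟨fun k => 2 * S (k + 1) - R (k + 1) - R k - U n (k + 1), ?_, fun k => ?_⟩
  · -- the row sums `R (k + 1) + R k` telescope modulo 2, and the top row sums to `R n`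
    have hR0 : R 0 = 0 := by simp [R]
    have htel : ∑ k ∈ range n, (R (k + 1) - R k) = R n - R 0 := sum_range_sub R n
    have htop : ∑ k ∈ range n, U n (k + 1) = R n := (sum_Icc_one_eq_sum_range _ n).symm
    refine ⟨∑ k ∈ range n, (S (k + 1) - R k) - R n, ?_⟩
    rw [Fin.sum_univ_eq_sum_range (fun k => 2 * S (k + 1) - R (k + 1) - R k - U n (k + 1))]
    simp only [sum_sub_distrib, ← mul_sum] at htel ⊢
    rw [htop]
    linarith
  · have htop := hT.2.2 k
    rw [hU] at htop
    simp only [wt, hU, hP, Nat.add_sub_cancel, R, S]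
    push_cast
    rw [htop]
    ring

lemma qcvec_cwtv_sub_of_mem_TabB {n : ℕ} {mu lam : Fin n → ℂ} (hlam : ∀ i, IsHalfInt (lam i))
    {W : Tab ℂ} (hW : W ∈ TabB n mu lam) :
    QCvec (fun k => cwtv n W k - (2 * mu k + lam k + 1)) := by
  obtain ⟨-, hcol, hD⟩ := hW
  obtain ⟨q, hq, hqv⟩ := qcvec_wt_sub_of_mem_DSt hlam hD
  choose z hz using hcol
  refine ⟨fun k => 2 * z k + q k, ?_, fun k => ?_⟩
  · rw [sum_add_distrib, ← mul_sum]
    exact dvd_add (dvd_mul_right 2 _) hq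
  · have hqk := hqv k
    have hzk := hz k
    simp only at hqk ⊢
    rw [show cwtv n W k = wt ((k : ℕ) + 1) W from rfl, wt_eq_two_mul_add_wt_CtoD W (by omega)]
    push_cast
    linear_combination hqk + 2 * hzk

def constColTab (n : ℕ) (t ℓ : ℕ → ℤ) : Tab ℂ :=
  ⟨fun k i => if 1 ≤ i ∧ i ≤ k ∧ k ≤ n then (if i = 1 then t k else ℓ i) else 0,
   fun k i => if 2 ≤ i ∧ i ≤ k ∧ k ≤ n then ℓ i else 0⟩

section constColTab

variable {n : ℕ} {t ℓ : ℕ → ℤ}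

lemma constColTab_u_one {k : ℕ} (hk : 1 ≤ k) (hkn : k ≤ n) :
    (constColTab n t ℓ).u k 1 = t k := by
  simp [constColTab, hk, hkn]

lemma constColTab_u {k i : ℕ} (hi : 2 ≤ i) (hik : i ≤ k) (hkn : k ≤ n) :
    (constColTab n t ℓ).u k i = ℓ i := by
  simp [constColTab, hik, hkn, show 1 ≤ i by omega, show i ≠ 1 by omega]

lemma constColTab_p {k i : ℕ} (hi : 2 ≤ i) (hik : i ≤ k) (hkn : k ≤ n) :
    (constColTab n t ℓ).p k i = ℓ i := by
  simp [constColTab, hi, hik, hkn]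

lemma isDStandard_constColTab (ht : ∀ k, 1 ≤ k → k ≤ n → ℓ 2 < t k ∧ t k ≤ -ℓ 2)
    (hℓ : ∀ i, 2 ≤ i → i < n → ℓ (i + 1) < ℓ i) : IsDStandard n (constColTab n t ℓ) := by
  intro k hk hkn
  have hneg : -(constColTab n t ℓ).p k 2 = ((-ℓ 2 : ℤ) : ℂ) := by
    rw [constColTab_p le_rfl hk hkn]; push_cast; rfl
  refine ⟨?_, fun i hi hik => ?_, fun i hi hik => ?_, ?_, fun i hi hik => ?_, fun i hi hik => ?_⟩
  · rw [hneg, constColTab_u_one (by omega) hkn]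
    exact intGE_intCast (ht k (by omega) hkn).2
  · rw [constColTab_p hi hik hkn, constColTab_u hi hik hkn]
    exact intGE_intCast le_rfl
  · rw [constColTab_p (by omega) hik hkn]
    rcases hi.eq_or_lt with rfl | hi
    · rw [constColTab_u_one (by omega) hkn]
      exact intGT_intCast (ht k (by omega) hkn).1
    · rw [constColTab_u hi (by omega) hkn]
      exact intGT_intCast (hℓ i hi (by omega))
  · rw [hneg, constColTab_u_one (by omega) (by omega)]
    exact intGE_intCast (ht (k - 1) (by omega) (by omega)).2
  · rw [constColTab_p hi (by omega) hkn, constColTab_u hi hik (by omega)]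
    exact intGE_intCast le_rfl
  · rw [constColTab_p (by omega) (by omega) hkn]
    rcases hi.eq_or_lt with rfl | hi
    · rw [constColTab_u_one (by omega) (by omega)]
      exact intGT_intCast (ht (k - 1) (by omega) (by omega)).1
    · rw [constColTab_u hi hik (by omega)]
      exact intGT_intCast (hℓ i hi (by omega))

lemma sum_u_constColTab {k : ℕ} (hk : 1 ≤ k) (hkn : k ≤ n) :
    ∑ i ∈ Icc 1 k, (constColTab n t ℓ).u k i = t k + ∑ i ∈ Icc 2 k, (ℓ i : ℂ) := by
  rw [sum_Icc_one_eq_add _ hk, constColTab_u_one hk hkn]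
  congr 1
  exact sum_congr rfl fun i hi => by simp only [mem_Icc] at hi; exact constColTab_u hi.1 hi.2 hkn

lemma sum_p_constColTab {k : ℕ} (hk : 1 ≤ k) (hkn : k ≤ n) :
    ∑ i ∈ Icc 1 k, (constColTab n t ℓ).p k i = ∑ i ∈ Icc 2 k, (ℓ i : ℂ) := by
  rw [sum_Icc_one_eq_add _ hk, show (constColTab n t ℓ).p k 1 = 0 by simp [constColTab], zero_add]
  exact sum_congr rfl fun i hi => by simp only [mem_Icc] at hi; exact constColTab_p hi.1 hi.2 hkn

lemma wt_one_constColTab (hn : 1 ≤ n) : wt 1 (constColTab n t ℓ) = 1 / 2 - t 1 := by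
  rw [wt, sum_u_constColTab le_rfl hn, sum_p_constColTab le_rfl hn]
  norm_num
  ring

lemma wt_succ_constColTab {k : ℕ} (hk : 1 ≤ k) (hkn : k + 1 ≤ n) :
    wt (k + 1) (constColTab n t ℓ) = ℓ (k + 1) - t (k + 1) - t k + k + 1 / 2 := by
  simp only [wt, sum_u_constColTab (by omega : 1 ≤ k + 1) hkn,
    sum_p_constColTab (by omega : 1 ≤ k + 1) hkn, Nat.add_sub_cancel,
    sum_u_constColTab hk (by omega : k ≤ n), sum_Icc_succ_top (by omega : 2 ≤ k + 1)]
  push_cast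
  ring

end constColTab

lemma constColTab_mem_DSt {n : ℕ} {lam : Fin n → ℂ} {t ℓ : ℕ → ℤ}
    (ht : ∀ k, 1 ≤ k → k ≤ n → ℓ 2 < t k ∧ t k ≤ -ℓ 2)
    (hℓ : ∀ i, 2 ≤ i → i < n → ℓ (i + 1) < ℓ i) (htn : t n = ℓ 1)
    (htop : ∀ i : Fin n, (ℓ ((i : ℕ) + 1) : ℂ) = lam i - ((i : ℕ) + 1) + 3 / 2) :
    constColTab n t ℓ ∈ DSt n lam := by
  refine ⟨⟨fun k i h => if_neg h, fun k i h => if_neg h⟩, isDStandard_constColTab ht hℓ,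
    fun i => ?_⟩
  rw [← htop i]
  rcases Nat.eq_zero_or_pos (i : ℕ) with h0 | h0
  · rw [h0, zero_add, constColTab_u_one i.pos le_rfl, htn]
  · exact constColTab_u (by omega) i.isLt le_rfl

lemma exists_parity_walk (a b : ℤ) (n : ℕ) (q : ℕ → ℤ) (hq : 2 ∣ ∑ k ∈ range n, q k) :
    ∃ t : ℕ → ℤ, t 0 = a ∧ t n = a ∧ (∀ k, 0 < k → k < n → t k = b ∨ t k = b - 1) ∧
      ∀ k < n, 2 ∣ t k + t (k + 1) + q k := by
  set S : ℕ → ℤ := fun k => ∑ j ∈ range k, q j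
  refine ⟨fun k => if 0 < k ∧ k < n then b - (b - a - S k) % 2 else a, by simp, by simp,
    fun k hk hkn => ?_, fun k hk => ?_⟩
  · simp only [hk, hkn, and_self, if_true]
    omega
  · have hpar : ∀ k ≤ n, 2 ∣ (if 0 < k ∧ k < n then b - (b - a - S k) % 2 else a) - a - S k := by
      intro k hk
      split_ifs with h
      · omega
      · rcases Nat.eq_zero_or_pos k with rfl | hk0
        · simp [S]
        · obtain rfl : k = n := by omega
          simpa [S] using hq
    have hS : S (k + 1) = S k + q k := sum_range_succ q k
    have h1 := hpar k hk.le
    have h2 := hpar (k + 1) hk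
    simp only at h1 h2 ⊢
    omega

lemma exists_topRow {n : ℕ} {lam : Fin n → ℂ} (hlam : ∀ i, IsHalfInt (lam i)) :
    ∃ ℓ : ℕ → ℤ, ∀ i : Fin n, (ℓ ((i : ℕ) + 1) : ℂ) = lam i - ((i : ℕ) + 1) + 3 / 2 := by
  choose M hM using hlam
  refine ⟨fun j => if h : j - 1 < n then M ⟨j - 1, h⟩ + 2 - j else 0, fun i => ?_⟩
  simp only [Nat.add_sub_cancel, i.isLt, dif_pos, hM]
  push_cast
  ring

section topRow

variable {n : ℕ} {lam : Fin n → ℂ} {ℓ : ℕ → ℤ}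

lemma SODominant.topRow_lt (hdom : SODominant lam)
    (htop : ∀ i : Fin n, (ℓ ((i : ℕ) + 1) : ℂ) = lam i - ((i : ℕ) + 1) + 3 / 2)
    {i : ℕ} (hi : 1 ≤ i) (hin : i < n) : ℓ (i + 1) < ℓ i := by
  obtain ⟨j, rfl⟩ : ∃ j, i = j + 1 := ⟨i - 1, by omega⟩
  have h := hdom.1 ⟨j, by omega⟩ ⟨j + 1, hin⟩ rfl
  rw [intGE_iff_of_sub_eq (d := ℓ (j + 1) - ℓ (j + 1 + 1) - 1)] at h
  · omega
  · have h1 := htop ⟨j, by omega⟩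
    have h2 := htop ⟨j + 1, hin⟩
    push_cast at h1 h2 ⊢
    linear_combination h2 - h1

lemma SODominant.topRow_one_add_two_nonpos (hdom : SODominant lam) (hn : 2 ≤ n)
    (htop : ∀ i : Fin n, (ℓ ((i : ℕ) + 1) : ℂ) = lam i - ((i : ℕ) + 1) + 3 / 2) :
    ℓ 1 + ℓ 2 ≤ 0 := by
  have h := hdom.2 ⟨0, by omega⟩ ⟨1, by omega⟩ rfl rfl
  rw [intGE_iff_of_sub_eq (d := -(ℓ 1 + ℓ 2))] at h
  · omega
  · have h1 := htop ⟨0, by omega⟩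
    have h2 := htop ⟨1, by omega⟩
    norm_num at h1 h2
    push_cast
    linear_combination h1 + h2

end topRow

lemma exists_mem_DSt_wt_sub_eq {n : ℕ} (hn : 2 ≤ n) {lam : Fin n → ℂ}
    (hlam : ∀ i, IsHalfInt (lam i)) (hdom : SODominant lam) (q : Fin n → ℤ) (hq : 2 ∣ ∑ i, q i) :
    ∃ T ∈ DSt n lam, ∀ k : Fin n, ∃ z : ℤ, wt ((k : ℕ) + 1) T - (lam k + 1) = q k + 2 * z := by
  obtain ⟨ℓ, htop⟩ := exists_topRow hlam
  have hℓ : ∀ i, 1 ≤ i → i < n → ℓ (i + 1) < ℓ i := fun i hi hin => hdom.topRow_lt htop hi hin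
  have hℓ12 := hdom.topRow_one_add_two_nonpos hn htop
  set q' : ℕ → ℤ := fun k => if h : k < n then q ⟨k, h⟩ else 0
  have hq' : ∀ k : Fin n, q' k = q k := fun k => dif_pos k.isLt
  have hsum : ∑ k ∈ range n, q' k = ∑ i, q i := by
    rw [← Fin.sum_univ_eq_sum_range]
    exact sum_congr rfl fun k _ => hq' k
  obtain ⟨t, ht0, htn, hmid, hpar⟩ := exists_parity_walk (ℓ 1) (-ℓ 2) n q' (hsum ▸ hq)
  refine ⟨constColTab n t ℓ, constColTab_mem_DSt (fun k hk hkn => ?_)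
    (fun i hi hin => hℓ i (by omega) hin) htn htop, fun k => ?_⟩
  · have h21 : ℓ 2 < ℓ 1 := hℓ 1 le_rfl (by omega)
    rcases hkn.lt_or_eq with hkn | rfl
    · rcases hmid k hk hkn with h | h <;> omega
    · omega
  · have hwt : wt ((k : ℕ) + 1) (constColTab n t ℓ) - (lam k + 1) = -(t k + t (k + 1)) := by
      have hk := htop k
      rcases Nat.eq_zero_or_pos (k : ℕ) with h0 | h0
      · rw [h0] at hk ⊢
        rw [wt_one_constColTab (by omega), ht0]
        push_cast at hk ⊢
        linear_combination hk
      · rw [wt_succ_constColTab h0 k.isLt]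
        linear_combination hk
    obtain ⟨w, hw⟩ := hpar k k.isLt
    refine ⟨-w, ?_⟩
    rw [hwt, ← hq' k]
    have hw' := congrArg (Int.cast : ℤ → ℂ) hw
    push_cast at hw' ⊢
    linear_combination -hw'

def Tab.withFirstCol (n : ℕ) (T : Tab ℂ) (c : Fin n → ℂ) : Tab ℂ :=
  ⟨T.u, fun k i => if h : i = 1 ∧ 1 ≤ k ∧ k ≤ n then c ⟨k - 1, by omega⟩ else T.p k i⟩

section withFirstCol

variable {n : ℕ} {T : Tab ℂ} {c : Fin n → ℂ}

lemma CtoD_withFirstCol (hT : ∀ k, T.p k 1 = 0) : CtoD (T.withFirstCol n c) = T := by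
  simp only [CtoD, Tab.withFirstCol]
  congr
  funext k i
  split_ifs with h1 h2 <;> simp_all

lemma cwtv_withFirstCol (hT : ∀ k, T.p k 1 = 0) (k : Fin n) :
    cwtv n (T.withFirstCol n c) k = 2 * c k + wt ((k : ℕ) + 1) T := by
  rw [show cwtv n _ k = wt ((k : ℕ) + 1) _ from rfl, wt_eq_two_mul_add_wt_CtoD _ (by omega),
    CtoD_withFirstCol hT]
  simp [Tab.withFirstCol]

lemma withFirstCol_mem_TabB {mu lam : Fin n → ℂ} (hT : T ∈ DSt n lam)
    (hc : ∀ k, IsInt (c k - mu k)) : T.withFirstCol n c ∈ TabB n mu lam := by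
  have hT1 : ∀ k, T.p k 1 = 0 := fun k => hT.1.2 k 1 (by omega)
  refine ⟨⟨hT.1.1, fun k i h => ?_⟩, fun k => ?_, (CtoD_withFirstCol hT1).symm ▸ hT⟩
  · simp only [Tab.withFirstCol]
    rw [dif_neg (by omega)]
    exact hT.1.2 k i (by omega)
  · simpa [Tab.withFirstCol] using hc k

end withFirstCol

theorem support_of_V_general (n : ℕ) (hn : 2 ≤ n) (mu lam : Fin n → ℂ)
    (hlam : ∀ i, IsHalfInt (lam i)) (hdom : SODominant lam) :
    {γ : Fin n → ℂ | ∃ W ∈ TabB n mu lam, γ = cwtv n W} =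
      {γ : Fin n → ℂ | QCvec (fun i => γ i - (2 * mu i + lam i + 1))} := by
  ext γ
  constructor
  · rintro ⟨W, hW, rfl⟩
    exact qcvec_cwtv_sub_of_mem_TabB hlam hW
  · rintro ⟨q, hq, hγ⟩
    obtain ⟨T, hT, hTq⟩ := exists_mem_DSt_wt_sub_eq hn hlam hdom q hq
    have hT1 : ∀ k, T.p k 1 = 0 := fun k => hT.1.2 k 1 (by omega)
    refine ⟨T.withFirstCol n (fun k => (γ k - wt ((k : ℕ) + 1) T) / 2),
      withFirstCol_mem_TabB hT fun k => ?_, funext fun k => ?_⟩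
    · obtain ⟨z, hz⟩ := hTq k
      exact ⟨-z, by push_cast; linear_combination (hγ k - hz) / 2⟩
    · rw [cwtv_withFirstCol hT1]
      ring

/-- the set of `C`-weights of tableaux in `𝔅(μ,λ)` is exactly
`2μ + λ + (1,…,1) + Q_C`. -/
theorem support_of_V (n : ℕ) (hn : 2 ≤ n) (mu lam : Fin n → ℂ)
    (hmu : ∀ i, ¬IsInt (mu i)) (hlam : ∀ i, IsHalfInt (lam i)) (hdom : SODominant lam) :
    {γ : Fin n → ℂ | ∃ W ∈ TabB n mu lam, γ = cwtv n W} =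
      {γ : Fin n → ℂ | QCvec (fun i => γ i - (2 * mu i + lam i + 1))} :=
  support_of_V_general n hn mu lam hlam hdom

end GTpaper
end
end
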